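/- (Lattice symmetries) Let n > 0, κ > 0, let T be any infinitive toppling sequence for the boundary sandpile BS(n·δ₀, κ), let u be its odometer and V = ⋃_k V_k its final set of visited sites. Then for every e ∈ 𝒩, denoting by ρ_e(x) = x − 2((x·e)/(e·e))·e the mirror reflection across the hyperplane through the origin orthogonal to e (which maps ℤ^d to itself), one has u(ρ_e(x)) = u(x) for all x ∈ ℤ^d and ρ_e(V) = V. -/
import Mathlib


open Filter

namespace Sandpile

/-- Lattice sites of `ℤ^d`. -/
abbrev Site (d : ℕ) := Fin d → ℤ

/-- Two sites are neighbours iff their `ℓ¹`-distance equals `1`. -/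
def nbr {d : ℕ} (x y : Site d) : Prop := (∑ i, |x i - y i|) = 1

/-- The (combinatorial) boundary of a set `V ⊆ ℤ^d`. -/
def bdry {d : ℕ} (V : Set (Site d)) : Set (Site d) :=
  {x | x ∈ V ∧ ∃ y, nbr x y ∧ y ∉ V}

/-- The (combinatorial) interior of a set `V ⊆ ℤ^d`. -/
def intr {d : ℕ} (V : Set (Site d)) : Set (Site d) := V \ bdry V

/-- The discrete Laplacian `Δu(x) = (1/(2d)) ∑_{y ∼ x} (u y - u x)`; the `2d`
neighbours of `x` are exactly the points `x ± eᵢ`. -/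
noncomputable def lap {d : ℕ} (u : Site d → ℝ) (x : Site d) : ℝ :=
  (1 / (2 * (d : ℝ))) *
    ∑ i : Fin d, ((u (x + Pi.single i 1) - u x) + (u (x - Pi.single i 1) - u x))

/-- A mass distribution: nonnegative with finite support. -/
def IsMassDist {d : ℕ} (μ : Site d → ℝ) : Prop :=
  (∀ x, 0 ≤ μ x) ∧ (Function.support μ).Finite

/-- Euclidean norm of a lattice point. -/
noncomputable def enorm {d : ℕ} (x : Site d) : ℝ :=
  Real.sqrt (∑ i, ((x i : ℝ)) ^ 2)

/-- A configuration of the boundary sandpile: visited sites, current mass, odometer. -/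
structure Config (d : ℕ) where
  V : Set (Site d)
  μ : Site d → ℝ
  u : Site d → ℝ

/-- A site is unstable if it is a boundary site of the visited set carrying mass above
the capacity `κ`, or an interior site carrying positive mass. -/
def Unstable {d : ℕ} (κ : ℝ) (c : Config d) (x : Site d) : Prop :=
  (x ∈ bdry c.V ∧ κ < c.μ x) ∨ (x ∈ intr c.V ∧ 0 < c.μ x)

open Classical in
/-- Toppling the site `x`: if `x` is unstable, its mass is distributed equally among its
`2d` neighbours, the odometer at `x` increases by the toppled mass, and the neighbours
of `x` become visited; toppling a stable site changes nothing. -/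
noncomputable def topple {d : ℕ} (κ : ℝ) (c : Config d) (x : Site d) : Config d :=
  if Unstable κ c x then
    { V := c.V ∪ {y | nbr x y}
      μ := fun y => if y = x then 0 else
        if nbr x y then c.μ y + c.μ x / (2 * (d : ℝ)) else c.μ y
      u := fun y => if y = x then c.u y + c.μ y else c.u y }
  else c

/-- The evolution of the boundary sandpile `BS(μ₀, κ)` along a toppling sequence `T`:
start from `V₀ = supp μ₀`, `u₀ = 0`, and at step `k` topple the site `T k`. -/
noncomputable def evolve {d : ℕ} (κ : ℝ) (μ0 : Site d → ℝ) (T : ℕ → Site d) :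
    ℕ → Config d
  | 0 => ⟨Function.support μ0, μ0, fun _ => 0⟩
  | k + 1 => topple κ (evolve κ μ0 T k) (T k)

/-- A toppling sequence is infinitive if every site occurs in it infinitely often. -/
def Infinitive {d : ℕ} (T : ℕ → Site d) : Prop :=
  ∀ x : Site d, {k : ℕ | T k = x}.Infinite

/-- The set of directions `𝒩 = {eᵢ, eᵢ + eⱼ, eᵢ - eⱼ : 1 ≤ i ≠ j ≤ d}`. -/
def dirN (d : ℕ) : Set (Site d) :=
  {v | ∃ i j : Fin d, i ≠ j ∧
    (v = Pi.single i 1 ∨ v = Pi.single i 1 + Pi.single j 1 ∨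
      v = Pi.single i 1 - Pi.single j 1)}

/-- The mirror reflection `ρ_e(x) = x - 2((x·e)/(e·e))·e` across the hyperplane through
the origin orthogonal to `e`.  For `e ∈ 𝒩` we have `e·e ∈ {1, 2}` and `2(x·e)` is
divisible by `e·e`, so the integer division below is exact and this map coincides with
the usual real reflection; in particular it maps `ℤ^d` to itself. -/
def reflDir {d : ℕ} (e : Site d) (x : Site d) : Site d :=
  x - ((2 * ∑ i, x i * e i) / (∑ i, e i * e i)) • e



lemma add_single_ne_sub_single (x : Site d) (i j : Fin d) :
    x + Pi.single i 1 ≠ x - Pi.single j 1 := by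
  intro h
  have := congrFun h i
  simp only [Pi.add_apply, Pi.sub_apply, Pi.single_apply] at this
  split_ifs at this <;> omega

lemma add_single_inj {x : Site d} {i j : Fin d}
    (h : x + Pi.single i 1 = x + Pi.single j 1) : i = j := by
  by_contra hij
  have := congrFun h i
  simp [Pi.single_apply, hij] at this

lemma sub_single_inj {x : Site d} {i j : Fin d}
    (h : x - Pi.single i 1 = x - Pi.single j 1) : i = j := by
  by_contra hij
  have := congrFun h i
  simp [Pi.single_apply, hij] at this

lemma add_single_ne_self (x : Site d) (i : Fin d) : x + Pi.single i 1 ≠ x := by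
  intro h
  have := congrFun h i
  simp [Pi.single_apply] at this

lemma sub_single_ne_self (x : Site d) (i : Fin d) : x - Pi.single i 1 ≠ x := by
  intro h
  have := congrFun h i
  simp [Pi.single_apply] at this

lemma nbr_comm {x y : Site d} : nbr x y ↔ nbr y x := by
  unfold nbr
  rw [Finset.sum_congr rfl (fun i _ => abs_sub_comm (x i) (y i))]

lemma nbr_iff {x y : Site d} :
    nbr x y ↔ ∃ i, y = x + Pi.single i 1 ∨ y = x - Pi.single i 1 := by
  constructor
  · intro h
    unfold nbr at h
    have hne : ∃ i, x i ≠ y i := by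
      by_contra hc
      push_neg at hc
      rw [Finset.sum_eq_zero (fun i _ => by rw [hc i]; simp)] at h
      omega
    obtain ⟨i, hi⟩ := hne
    have h1 : 1 ≤ |x i - y i| := Int.one_le_abs (sub_ne_zero.mpr hi)
    have hsplit : |x i - y i| + ∑ j ∈ Finset.univ.erase i, |x j - y j| = 1 := by
      rw [← h]
      exact Finset.add_sum_erase Finset.univ (fun j => |x j - y j|) (Finset.mem_univ i)
    have hnn : 0 ≤ ∑ j ∈ Finset.univ.erase i, |x j - y j| :=
      Finset.sum_nonneg (fun j _ => abs_nonneg _)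
    have hrest : ∑ j ∈ Finset.univ.erase i, |x j - y j| = 0 := by omega
    have hxi : |x i - y i| = 1 := by omega
    have hothers : ∀ j, j ≠ i → x j = y j := by
      intro j hj
      have h0 : |x j - y j| = 0 := (Finset.sum_eq_zero_iff_of_nonneg
        (fun j _ => abs_nonneg (x j - y j))).mp hrest j
        (Finset.mem_erase.mpr ⟨hj, Finset.mem_univ j⟩)
      rw [abs_eq_zero, sub_eq_zero] at h0
      exact h0
    refine ⟨i, ?_⟩
    rcases (abs_eq (by norm_num : (0:ℤ) ≤ 1)).mp hxi with hc | hc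
    · right
      funext j
      by_cases hj : j = i
      · subst hj; simp [Pi.single_apply]; omega
      · simp [Pi.single_apply, hj, (hothers j hj)]
    · left
      funext j
      by_cases hj : j = i
      · subst hj; simp [Pi.single_apply]; omega
      · simp [Pi.single_apply, hj, (hothers j hj)]
  · rintro ⟨i, h | h⟩ <;> subst h <;> unfold nbr
    · have key : ∀ j : Fin d, |x j - (x + Pi.single i 1 : Site d) j| = if j = i then 1 else 0 := by
        intro j
        by_cases hj : j = i
        · subst hj; simp [Pi.single_apply]
        · simp [Pi.single_apply, hj]
      rw [Finset.sum_congr rfl (fun j _ => key j)]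
      simp
    · have key : ∀ j : Fin d, |x j - (x - Pi.single i 1 : Site d) j| = if j = i then 1 else 0 := by
        intro j
        by_cases hj : j = i
        · subst hj; simp [Pi.single_apply]
        · simp [Pi.single_apply, hj]
      rw [Finset.sum_congr rfl (fun j _ => key j)]
      simp

lemma not_nbr_self (x : Site d) : ¬ nbr x x := by
  rw [nbr_iff]
  rintro ⟨i, h | h⟩
  · exact add_single_ne_self x i h.symm
  · exact sub_single_ne_self x i h.symm

open Classical in
lemma sum_ite_nbr (x z : Site d) (c : ℝ) :
    (∑ i : Fin d, ((if x + Pi.single i 1 = z then c else 0) +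
      (if x - Pi.single i 1 = z then c else 0))) = if nbr x z then c else 0 := by
  by_cases hn : nbr x z
  · rw [if_pos hn]
    obtain ⟨i0, h | h⟩ := nbr_iff.mp hn
    · rw [Finset.sum_eq_single i0]
      · rw [if_pos h.symm, if_neg (by rw [h]; exact fun hc => add_single_ne_sub_single x i0 i0 hc.symm)]
        ring
      · intro j _ hj
        rw [if_neg (fun hc => hj (add_single_inj (h ▸ hc))),
          if_neg (by rw [h]; exact fun hc => add_single_ne_sub_single x i0 j hc.symm)]
        ring
      · intro h'; exact absurd (Finset.mem_univ i0) h'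
    · rw [Finset.sum_eq_single i0]
      · rw [if_neg (by rw [h]; exact fun hc => add_single_ne_sub_single x i0 i0 hc), if_pos h.symm]
        ring
      · intro j _ hj
        rw [if_neg (by rw [h]; exact fun hc => add_single_ne_sub_single x j i0 hc),
          if_neg (fun hc => hj (sub_single_inj (h ▸ hc)))]
        ring
      · intro h'; exact absurd (Finset.mem_univ i0) h'
  · rw [if_neg hn]
    apply Finset.sum_eq_zero
    intro i _
    rw [if_neg (fun hc => hn (nbr_iff.mpr ⟨i, Or.inl hc.symm⟩)),
      if_neg (fun hc => hn (nbr_iff.mpr ⟨i, Or.inr hc.symm⟩))]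
    ring

open scoped Classical

noncomputable def nbrSum {d : ℕ} (v : Site d → ℝ) (x : Site d) : ℝ :=
  ∑ i : Fin d, (v (x + Pi.single i 1) + v (x - Pi.single i 1))

section Dyn

variable {d : ℕ} {κ : ℝ} {μ0 : Site d → ℝ} {T : ℕ → Site d}

lemma evolve_succ (κ : ℝ) (μ0 : Site d → ℝ) (T : ℕ → Site d) (k : ℕ) :
    evolve κ μ0 T (k+1) = topple κ (evolve κ μ0 T k) (T k) := rfl

lemma topple_stable {c : Config d} {z : Site d} (h : ¬ Unstable κ c z) :
    topple κ c z = c := by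
  unfold topple; rw [if_neg h]

lemma topple_unstable {c : Config d} {z : Site d} (h : Unstable κ c z) :
    topple κ c z =
      { V := c.V ∪ {y | nbr z y}
        μ := fun y => if y = z then 0 else
          if nbr z y then c.μ y + c.μ z / (2 * (d : ℝ)) else c.μ y
        u := fun y => if y = z then c.u y + c.μ y else c.u y } := by
  unfold topple; rw [if_pos h]

lemma Unstable.mu_pos (hκ : 0 < κ) {c : Config d} {z : Site d}
    (h : Unstable κ c z) : 0 < c.μ z := by
  rcases h with ⟨_, h⟩ | ⟨_, h⟩
  · linarith
  · exact h

lemma u_succ_ge (hκ : 0 < κ) (k : ℕ) (x : Site d) :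
    (evolve κ μ0 T k).u x ≤ (evolve κ μ0 T (k+1)).u x := by
  rw [evolve_succ]
  by_cases hU : Unstable κ (evolve κ μ0 T k) (T k)
  · rw [topple_unstable hU]
    dsimp only
    by_cases hx : x = T k
    · rw [if_pos hx]
      subst hx
      have := hU.mu_pos hκ
      linarith
    · rw [if_neg hx]
  · rw [topple_stable hU]

lemma u_mono (hκ : 0 < κ) {k l : ℕ} (h : k ≤ l) (x : Site d) :
    (evolve κ μ0 T k).u x ≤ (evolve κ μ0 T l).u x :=
  (monotone_nat_of_le_succ (fun k => u_succ_ge hκ k x)) h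

lemma u_zero (x : Site d) : (evolve κ μ0 T 0).u x = 0 := rfl

lemma u_nonneg (hκ : 0 < κ) (k : ℕ) (x : Site d) :
    0 ≤ (evolve κ μ0 T k).u x := by
  have := u_mono (μ0 := μ0) (T := T) hκ (Nat.zero_le k) x
  rwa [u_zero] at this

lemma V_mono_succ (k : ℕ) : (evolve κ μ0 T k).V ⊆ (evolve κ μ0 T (k+1)).V := by
  rw [evolve_succ]
  by_cases hU : Unstable κ (evolve κ μ0 T k) (T k)
  · rw [topple_unstable hU]; exact Set.subset_union_left
  · rw [topple_stable hU]

lemma V_mono {k l : ℕ} (h : k ≤ l) : (evolve κ μ0 T k).V ⊆ (evolve κ μ0 T l).V := by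
  induction l with
  | zero => rw [Nat.le_zero.mp h]
  | succ l ih =>
    rcases Nat.lt_or_ge k (l+1) with h' | h'
    · exact (ih (Nat.lt_succ_iff.mp h')).trans (V_mono_succ l)
    · rw [Nat.le_antisymm h h']

lemma V_char (hκ : 0 < κ) (k : ℕ) :
    (evolve κ μ0 T k).V = Function.support μ0 ∪
      {w | ∃ z, nbr z w ∧ 0 < (evolve κ μ0 T k).u z} := by
  induction k with
  | zero =>
    ext w
    simp [evolve]
  | succ k ih =>
    rw [evolve_succ]
    by_cases hU : Unstable κ (evolve κ μ0 T k) (T k)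
    · rw [topple_unstable hU]
      ext w
      simp only [Set.mem_union, Set.mem_setOf_eq, ih, Set.union_assoc]
      constructor
      · rintro (hs | (⟨z, hz, hzu⟩ | hnw))
        · exact Or.inl hs
        · refine Or.inr ⟨z, hz, lt_of_lt_of_le hzu ?_⟩
          by_cases h : z = T k
          · rw [if_pos h]
            subst h
            have := hU.mu_pos hκ
            linarith
          · rw [if_neg h]
        · refine Or.inr ⟨T k, hnw, ?_⟩
          rw [if_pos rfl]
          have h1 := hU.mu_pos hκ
          have h2 := u_nonneg (μ0 := μ0) (T := T) hκ k (T k)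
          linarith
      · rintro (hs | ⟨z, hz, hzu⟩)
        · exact Or.inl hs
        · by_cases hzT : z = T k
          · subst hzT; exact Or.inr (Or.inr hz)
          · rw [if_neg hzT] at hzu
            exact Or.inr (Or.inl ⟨z, hz, hzu⟩)
    · rw [topple_stable hU]; exact ih

lemma mass_id (k : ℕ) (x : Site d) :
    (evolve κ μ0 T k).μ x = μ0 x - (evolve κ μ0 T k).u x
      + (1 / (2 * (d : ℝ))) * nbrSum (evolve κ μ0 T k).u x := by
  induction k with
  | zero => simp [evolve, nbrSum, u_zero]
  | succ k ih =>
    rw [evolve_succ]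
    by_cases hU : Unstable κ (evolve κ μ0 T k) (T k)
    · rw [topple_unstable hU]
      set c := evolve κ μ0 T k with hc
      set z := T k with hz
      dsimp only
      have hw : nbrSum (fun y => if y = z then c.u y + c.μ y else c.u y) x
          = nbrSum c.u x + (if nbr x z then c.μ z else 0) := by
        unfold nbrSum
        rw [← sum_ite_nbr x z (c.μ z), ← Finset.sum_add_distrib]
        apply Finset.sum_congr rfl
        intro i _
        by_cases h1 : x + Pi.single i 1 = z
        · have h2 : ¬ x - Pi.single i 1 = z :=
            fun hc2 => add_single_ne_sub_single x i i (h1.trans hc2.symm)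
          simp only [if_pos h1, if_neg h2, h1, if_true, eq_self_iff_true]
          ring
        · by_cases h2 : x - Pi.single i 1 = z
          · simp only [if_pos h2, if_neg h1, h2, if_true, eq_self_iff_true]
            ring
          · simp only [if_neg h1, if_neg h2]
            ring
      rw [hw]
      clear hw
      by_cases hx : x = z
      · have hnn : ¬ nbr x z := by rw [hx]; exact not_nbr_self z
        rw [if_pos hx, if_pos hx, if_neg hnn]
        rw [ih]
        ring
      · rw [if_neg hx, if_neg hx]
        by_cases hn : nbr z x
        · rw [if_pos hn, if_pos (nbr_comm.mpr hn), ih]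
          ring
        · rw [if_neg hn, if_neg (fun hc2 => hn (nbr_comm.mp hc2)), ih]
          ring
    · rw [topple_stable hU]; exact ih

end Dyn
noncomputable def muLim {d : ℕ} (μ0 : Site d → ℝ) (u : Site d → ℝ) (x : Site d) : ℝ :=
  μ0 x - u x + (1 / (2 * (d : ℝ))) * nbrSum u x

def VLim {d : ℕ} (μ0 : Site d → ℝ) (u : Site d → ℝ) : Set (Site d) :=
  Function.support μ0 ∪ {w | ∃ z, nbr z w ∧ 0 < u z}

section Limit

variable {d : ℕ} {κ : ℝ} {μ0 : Site d → ℝ} {T : ℕ → Site d} {u : Site d → ℝ}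

lemma u_le_lim (hκ : 0 < κ)
    (hu : ∀ x, Tendsto (fun k => (evolve κ μ0 T k).u x) atTop (nhds (u x)))
    (k : ℕ) (x : Site d) : (evolve κ μ0 T k).u x ≤ u x :=
  Monotone.ge_of_tendsto (monotone_nat_of_le_succ (fun k => u_succ_ge hκ k x)) (hu x) k

lemma u_lim_nonneg (hκ : 0 < κ)
    (hu : ∀ x, Tendsto (fun k => (evolve κ μ0 T k).u x) atTop (nhds (u x)))
    (x : Site d) : 0 ≤ u x := by
  have := u_le_lim hκ hu 0 x
  rwa [u_zero] at this

lemma exists_pos_of_u_pos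
    (hu : ∀ x, Tendsto (fun k => (evolve κ μ0 T k).u x) atTop (nhds (u x)))
    {x : Site d} (h : 0 < u x) : ∃ k, 0 < (evolve κ μ0 T k).u x := by
  by_contra hc
  push_neg at hc
  have := le_of_tendsto (hu x) (Filter.Eventually.of_forall hc)
  linarith

lemma mu_tendsto
    (hu : ∀ x, Tendsto (fun k => (evolve κ μ0 T k).u x) atTop (nhds (u x)))
    (x : Site d) :
    Tendsto (fun k => (evolve κ μ0 T k).μ x) atTop (nhds (muLim μ0 u x)) := by
  have heq : (fun k => (evolve κ μ0 T k).μ x) = fun k =>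
      μ0 x - (evolve κ μ0 T k).u x + (1 / (2 * (d : ℝ))) *
        ∑ i : Fin d, ((evolve κ μ0 T k).u (x + Pi.single i 1) +
          (evolve κ μ0 T k).u (x - Pi.single i 1)) :=
    funext (fun k => mass_id k x)
  rw [heq]
  exact (tendsto_const_nhds.sub (hu x)).add
    ((tendsto_finset_sum _ (fun i _ => (hu _).add (hu _))).const_mul _)

lemma V_subset_VLim (hκ : 0 < κ)
    (hu : ∀ x, Tendsto (fun k => (evolve κ μ0 T k).u x) atTop (nhds (u x)))
    (k : ℕ) : (evolve κ μ0 T k).V ⊆ VLim μ0 u := by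
  rw [V_char hκ]
  apply Set.union_subset_union_right
  rintro w ⟨z, hz, hzu⟩
  exact ⟨z, hz, lt_of_lt_of_le hzu (u_le_lim hκ hu k z)⟩

lemma eventually_mem_V (hκ : 0 < κ)
    (hu : ∀ x, Tendsto (fun k => (evolve κ μ0 T k).u x) atTop (nhds (u x)))
    {x : Site d} (hx : x ∈ VLim μ0 u) :
    ∀ᶠ k in atTop, x ∈ (evolve κ μ0 T k).V := by
  rcases hx with hs | ⟨z, hz, hzu⟩
  · exact Filter.Eventually.of_forall (fun k => by rw [V_char hκ]; exact Or.inl hs)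
  · obtain ⟨k0, hk0⟩ := exists_pos_of_u_pos hu hzu
    rw [eventually_atTop]
    refine ⟨k0, fun k hk => ?_⟩
    rw [V_char hκ]
    exact Or.inr ⟨z, hz, lt_of_lt_of_le hk0 (u_mono hκ hk z)⟩

lemma notMem_V (hκ : 0 < κ)
    (hu : ∀ x, Tendsto (fun k => (evolve κ μ0 T k).u x) atTop (nhds (u x)))
    {x : Site d} (hx : x ∉ VLim μ0 u) (k : ℕ) : x ∉ (evolve κ μ0 T k).V :=
  fun hc => hx (V_subset_VLim hκ hu k hc)

lemma iUnion_V (hκ : 0 < κ)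
    (hu : ∀ x, Tendsto (fun k => (evolve κ μ0 T k).u x) atTop (nhds (u x))) :
    (⋃ k : ℕ, (evolve κ μ0 T k).V) = VLim μ0 u := by
  ext x
  constructor
  · rintro hx
    obtain ⟨k, hk⟩ := Set.mem_iUnion.mp hx
    exact V_subset_VLim hκ hu k hk
  · intro hx
    obtain ⟨k, hk⟩ := (eventually_mem_V hκ hu hx).exists
    exact Set.mem_iUnion.mpr ⟨k, hk⟩

lemma engine (hκ : 0 < κ) (hT : Infinitive T)
    (hu : ∀ x, Tendsto (fun k => (evolve κ μ0 T k).u x) atTop (nhds (u x)))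
    (z : Site d) (c : ℝ) (hc : 0 < c)
    (hev : ∀ᶠ k in atTop, Unstable κ (evolve κ μ0 T k) z ∧ c ≤ (evolve κ μ0 T k).μ z) :
    False := by
  obtain ⟨K, hK⟩ := eventually_atTop.mp hev
  have grow : ∀ m : ℕ, ∃ k, (m : ℝ) * c ≤ (evolve κ μ0 T k).u z := by
    intro m
    induction m with
    | zero => exact ⟨0, by rw [u_zero]; simp⟩
    | succ m ih =>
      obtain ⟨k, hk⟩ := ih
      obtain ⟨k', hk'T, hk'⟩ := (hT z).exists_gt (max k K)
      have hkk : k ≤ k' := le_of_lt (lt_of_le_of_lt (le_max_left _ _) hk')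
      have hKk : K ≤ k' := le_of_lt (lt_of_le_of_lt (le_max_right _ _) hk')
      obtain ⟨hUn, hcμ⟩ := hK k' hKk
      refine ⟨k' + 1, ?_⟩
      have hTz : T k' = z := hk'T
      rw [evolve_succ, hTz, topple_unstable hUn]
      dsimp only
      rw [if_pos rfl]
      have hmono := u_mono (κ := κ) (μ0 := μ0) (T := T) hκ hkk z
      push_cast
      linarith
  obtain ⟨m, hm⟩ := exists_nat_gt (u z / c)
  obtain ⟨k, hk⟩ := grow m
  have h1 : (evolve κ μ0 T k).u z ≤ u z := u_le_lim hκ hu k z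
  have h2 : u z < m * c := (div_lt_iff₀ hc).mp hm
  linarith

lemma limit_stable_bdry (hκ : 0 < κ) (hT : Infinitive T)
    (hu : ∀ x, Tendsto (fun k => (evolve κ μ0 T k).u x) atTop (nhds (u x)))
    {z : Site d} (hz : z ∈ bdry (VLim μ0 u)) : muLim μ0 u z ≤ κ := by
  by_contra hgt
  push_neg at hgt
  obtain ⟨hzV, y, hny, hyV⟩ := hz
  have hev1 := eventually_mem_V hκ hu hzV
  have hyn := notMem_V hκ hu hyV
  have hev2 : ∀ᶠ k in atTop, κ < (evolve κ μ0 T k).μ z :=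
    (mu_tendsto hu z).eventually (eventually_gt_nhds hgt)
  refine engine hκ hT hu z κ hκ ((hev1.and hev2).mono ?_)
  rintro k ⟨h1, h2⟩
  exact ⟨Or.inl ⟨⟨h1, y, hny, hyn k⟩, h2⟩, le_of_lt h2⟩

lemma limit_stable_intr (hκ : 0 < κ) (hT : Infinitive T)
    (hu : ∀ x, Tendsto (fun k => (evolve κ μ0 T k).u x) atTop (nhds (u x)))
    {z : Site d} (hz : z ∈ intr (VLim μ0 u)) : muLim μ0 u z ≤ 0 := by
  by_contra hgt
  push_neg at hgt
  obtain ⟨hzV, hznb⟩ := hz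
  have hall : ∀ y, nbr z y → y ∈ VLim μ0 u := by
    intro y hy
    by_contra hyV
    exact hznb ⟨hzV, y, hy, hyV⟩
  have hev1 := eventually_mem_V hκ hu hzV
  have hev3 : ∀ᶠ k in atTop, ∀ i : Fin d,
      ((z + Pi.single i 1 : Site d) ∈ (evolve κ μ0 T k).V ∧
       (z - Pi.single i 1 : Site d) ∈ (evolve κ μ0 T k).V) :=
    Filter.eventually_all.mpr (fun i =>
      (eventually_mem_V hκ hu (hall _ (nbr_iff.mpr ⟨i, Or.inl rfl⟩))).and
      (eventually_mem_V hκ hu (hall _ (nbr_iff.mpr ⟨i, Or.inr rfl⟩))))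
  have hev4 : ∀ᶠ k in atTop, muLim μ0 u z / 2 < (evolve κ μ0 T k).μ z :=
    (mu_tendsto hu z).eventually (eventually_gt_nhds (half_lt_self hgt))
  refine engine hκ hT hu z (muLim μ0 u z / 2) (half_pos hgt)
    (((hev1.and hev3).and hev4).mono ?_)
  rintro k ⟨⟨h1, h3⟩, h4⟩
  have hnb : z ∉ bdry (evolve κ μ0 T k).V := by
    rintro ⟨-, y, hy, hyV⟩
    obtain ⟨i, hi | hi⟩ := nbr_iff.mp hy
    · exact hyV (hi ▸ (h3 i).1)
    · exact hyV (hi ▸ (h3 i).2)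
  exact ⟨Or.inr ⟨⟨h1, hnb⟩, lt_trans (half_pos hgt) h4⟩, le_of_lt h4⟩

end Limit
section LemA

variable {d : ℕ} {κ : ℝ} {μ0 : Site d → ℝ} {T : ℕ → Site d} {u : Site d → ℝ}

lemma lemA (hκ : 0 < κ) (hT : Infinitive T)
    (hu : ∀ x, Tendsto (fun k => (evolve κ μ0 T k).u x) atTop (nhds (u x)))
    (T' : ℕ → Site d) : ∀ j x, (evolve κ μ0 T' j).u x ≤ u x := by
  intro j
  induction j with
  | zero => intro x; rw [u_zero]; exact u_lim_nonneg hκ hu x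
  | succ j ih =>
    have hVsub : (evolve κ μ0 T' j).V ⊆ VLim μ0 u := by
      rw [V_char hκ]
      apply Set.union_subset_union_right
      rintro w ⟨z, hz, hzu⟩
      exact ⟨z, hz, lt_of_lt_of_le hzu (ih z)⟩
    intro x
    rw [evolve_succ]
    by_cases hU : Unstable κ (evolve κ μ0 T' j) (T' j)
    · rw [topple_unstable hU]
      dsimp only
      by_cases hx : x = T' j
      · rw [if_pos hx, hx]
        have hμ' := mass_id (κ := κ) (μ0 := μ0) (T := T') j (T' j)
        have hS : nbrSum (evolve κ μ0 T' j).u (T' j) ≤ nbrSum u (T' j) :=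
          Finset.sum_le_sum (fun i _ => add_le_add (ih _) (ih _))
        have hcoef : (0:ℝ) ≤ 1 / (2 * (d:ℝ)) := by positivity
        have hmul := mul_le_mul_of_nonneg_left hS hcoef
        have hul : muLim μ0 u (T' j)
            = μ0 (T' j) - u (T' j) + (1 / (2 * (d:ℝ))) * nbrSum u (T' j) := rfl
        have hnn := u_nonneg (κ := κ) (μ0 := μ0) (T := T') hκ j (T' j)
        have hunn := u_lim_nonneg hκ hu (T' j)
        rcases hU with ⟨hb, hμκ⟩ | ⟨hi, hμp⟩
        · by_cases hy : ∃ y, nbr (T' j) y ∧ y ∉ VLim μ0 u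
          · exfalso
            obtain ⟨y, hny, hyV⟩ := hy
            have huz : u (T' j) = 0 := by
              rcases lt_or_eq_of_le hunn with hpos | heq
              · exact absurd (Or.inr ⟨T' j, hny, hpos⟩) hyV
              · exact heq.symm
            have hstab := limit_stable_bdry hκ hT hu ⟨hVsub hb.1, y, hny, hyV⟩
            linarith
          · push_neg at hy
            have hintr : (T' j) ∈ intr (VLim μ0 u) := by
              refine ⟨hVsub hb.1, ?_⟩
              rintro ⟨-, y, hny, hyV⟩
              exact hyV (hy y hny)
            have hstab := limit_stable_intr hκ hT hu hintr
            linarith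
        · have hally : ∀ y, nbr (T' j) y → y ∈ (evolve κ μ0 T' j).V := by
            intro y hy
            by_contra hc
            exact hi.2 ⟨hi.1, y, hy, hc⟩
          have hintr : (T' j) ∈ intr (VLim μ0 u) := by
            refine ⟨hVsub hi.1, ?_⟩
            rintro ⟨-, y, hny, hyV⟩
            exact hyV (hVsub (hally y hny))
          have hstab := limit_stable_intr hκ hT hu hintr
          linarith
      · rw [if_neg hx]; exact ih x
    · rw [topple_stable hU]; exact ih x

end LemA
def mapC {d : ℕ} (g : Site d → Site d) (c : Config d) : Config d :=
  ⟨{x | g x ∈ c.V}, fun x => c.μ (g x), fun x => c.u (g x)⟩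

section Equi

variable {d : ℕ} {κ : ℝ} {μ0 : Site d → ℝ} {g : Site d → Site d}

lemma nbr_g (hgi : Function.Involutive g)
    (hgn : ∀ x y, nbr (g x) (g y) ↔ nbr x y) (x y : Site d) :
    nbr (g x) y ↔ nbr x (g y) := by
  conv_lhs => rw [← hgi y]
  exact hgn x (g y)

lemma mem_mapC_V (c : Config d) (x : Site d) : x ∈ (mapC g c).V ↔ g x ∈ c.V := Iff.rfl

lemma bdry_mapC (hgi : Function.Involutive g)
    (hgn : ∀ x y, nbr (g x) (g y) ↔ nbr x y) (c : Config d) (z : Site d) :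
    g z ∈ bdry (mapC g c).V ↔ z ∈ bdry c.V := by
  unfold bdry mapC
  simp only [Set.mem_setOf_eq, hgi z]
  constructor
  · rintro ⟨h, y, hny, hyV⟩
    exact ⟨h, g y, (nbr_g hgi hgn z y).mp hny, hyV⟩
  · rintro ⟨h, y, hny, hyV⟩
    refine ⟨h, g y, (hgn z y).mpr hny, ?_⟩
    rw [hgi y]
    exact hyV

lemma intr_mapC (hgi : Function.Involutive g)
    (hgn : ∀ x y, nbr (g x) (g y) ↔ nbr x y) (c : Config d) (z : Site d) :
    g z ∈ intr (mapC g c).V ↔ z ∈ intr c.V := by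
  unfold intr
  simp only [Set.mem_diff, bdry_mapC hgi hgn, mem_mapC_V, hgi z]

lemma unstable_mapC (hgi : Function.Involutive g)
    (hgn : ∀ x y, nbr (g x) (g y) ↔ nbr x y) (c : Config d) (z : Site d) :
    Unstable κ (mapC g c) (g z) ↔ Unstable κ c z := by
  have hμ : (mapC g c).μ (g z) = c.μ z := by
    show c.μ (g (g z)) = c.μ z
    rw [hgi z]
  unfold Unstable
  rw [bdry_mapC hgi hgn, intr_mapC hgi hgn, hμ]

lemma topple_mapC (hgi : Function.Involutive g)
    (hgn : ∀ x y, nbr (g x) (g y) ↔ nbr x y) (c : Config d) (z : Site d) :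
    topple κ (mapC g c) (g z) = mapC g (topple κ c z) := by
  by_cases hU : Unstable κ c z
  · rw [topple_unstable ((unstable_mapC hgi hgn c z).mpr hU), topple_unstable hU]
    unfold mapC
    simp only [Config.mk.injEq]
    refine ⟨?_, ?_, ?_⟩
    · ext w
      simp only [Set.mem_union, Set.mem_setOf_eq]
      constructor
      · rintro (h | h)
        · exact Or.inl h
        · exact Or.inr ((nbr_g hgi hgn z w).mp h)
      · rintro (h | h)
        · exact Or.inl h
        · exact Or.inr ((nbr_g hgi hgn z w).mpr h)
    · funext y
      have hc1 : (y = g z) ↔ (g y = z) := by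
        constructor
        · intro h; rw [h, hgi z]
        · intro h; rw [← h, hgi y]
      have hc2 : nbr (g z) y ↔ nbr z (g y) := nbr_g hgi hgn z y
      by_cases h1 : g y = z
      · rw [if_pos (hc1.mpr h1), if_pos h1]
      · rw [if_neg (fun hc => h1 (hc1.mp hc)), if_neg h1]
        by_cases h2 : nbr z (g y)
        · rw [if_pos (hc2.mpr h2), if_pos h2, hgi z]
        · rw [if_neg (fun hc => h2 (hc2.mp hc)), if_neg h2]
    · funext y
      have hc1 : (y = g z) ↔ (g y = z) := by
        constructor
        · intro h; rw [h, hgi z]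
        · intro h; rw [← h, hgi y]
      by_cases h1 : g y = z
      · rw [if_pos (hc1.mpr h1), if_pos h1]
      · rw [if_neg (fun hc => h1 (hc1.mp hc)), if_neg h1]
  · rw [topple_stable hU,
      topple_stable (fun hc => hU ((unstable_mapC hgi hgn c z).mp hc))]

lemma evolve_mapC (hgi : Function.Involutive g)
    (hgn : ∀ x y, nbr (g x) (g y) ↔ nbr x y)
    (hμ0 : ∀ x, μ0 (g x) = μ0 x) (T : ℕ → Site d) :
    ∀ k, evolve κ μ0 (fun j => g (T j)) k = mapC g (evolve κ μ0 T k) := by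
  intro k
  induction k with
  | zero =>
    unfold evolve mapC
    simp only [Config.mk.injEq]
    refine ⟨?_, ?_, trivial⟩
    · ext w
      simp only [Function.mem_support, Set.mem_setOf_eq, hμ0 w]
    · funext w
      rw [hμ0 w]
  | succ k ih =>
    rw [evolve_succ, evolve_succ, ih, topple_mapC hgi hgn]

end Equi
section Refl

variable {d : ℕ}

lemma reflDir_spec {e : Site d} (he : e ∈ dirN d) :
    ∃ σ : Equiv.Perm (Fin d), ∃ s : Fin d → ℤ,
      (∀ i, σ (σ i) = i) ∧ (∀ i, s i = 1 ∨ s i = -1) ∧ (∀ i, s (σ i) = s i) ∧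
      (∀ x : Site d, reflDir e x = fun i => s i * x (σ i)) := by
  obtain ⟨i, j, hij, he⟩ := he
  rcases he with rfl | rfl | rfl
  · refine ⟨Equiv.refl _, fun k => if k = i then -1 else 1, fun k => rfl, ?_, fun k => rfl, ?_⟩
    · intro k; by_cases h : k = i <;> simp [h]
    · intro x
      unfold reflDir
      have hs1 : (∑ t, (Pi.single i 1 : Site d) t * (Pi.single i 1 : Site d) t) = (1:ℤ) := by
        simp [Pi.single_apply]
      have hs2 : (∑ t, x t * (Pi.single i 1 : Site d) t) = x i := by
        simp [Pi.single_apply, mul_ite]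
      rw [hs1, hs2, Int.ediv_one]
      funext k
      simp only [Pi.sub_apply, Pi.smul_apply, smul_eq_mul, Pi.single_apply,
        Equiv.refl_apply]
      by_cases h : k = i
      · rw [if_pos h, if_pos h, h]; ring
      · rw [if_neg h, if_neg h]; ring
  · refine ⟨Equiv.swap i j, fun k => if k = i ∨ k = j then -1 else 1,
      fun k => Equiv.swap_apply_self i j k, ?_, ?_, ?_⟩
    · intro k; by_cases h : k = i ∨ k = j <;> simp [h]
    · intro k
      by_cases h1 : k = i
      · rw [h1, Equiv.swap_apply_left]; simp
      · by_cases h2 : k = j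
        · rw [h2, Equiv.swap_apply_right]; simp
        · rw [Equiv.swap_apply_of_ne_of_ne h1 h2]
    · intro x
      unfold reflDir
      have hs1 : (∑ t, (Pi.single i 1 + Pi.single j 1 : Site d) t *
          (Pi.single i 1 + Pi.single j 1 : Site d) t) = (2:ℤ) := by
        have h1t : ∀ t : Fin d, (Pi.single i 1 + Pi.single j 1 : Site d) t *
            (Pi.single i 1 + Pi.single j 1 : Site d) t
            = (if t = i then 1 else 0) + (if t = j then 1 else 0) := by
          intro t
          simp only [Pi.add_apply, Pi.single_apply]
          by_cases h : t = i <;> by_cases h2 : t = j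
          · exact absurd (h.symm.trans h2) hij
          · norm_num [h, h2, hij, Ne.symm hij]
          · norm_num [h, h2, hij, Ne.symm hij]
          · norm_num [h, h2, hij, Ne.symm hij]
        rw [Finset.sum_congr rfl (fun t _ => h1t t), Finset.sum_add_distrib]
        simp
      have hs2 : (∑ t, x t * (Pi.single i 1 + Pi.single j 1 : Site d) t) = x i + x j := by
        have h2t : ∀ t : Fin d, x t * (Pi.single i 1 + Pi.single j 1 : Site d) t
            = (if t = i then x t else 0) + (if t = j then x t else 0) := by
          intro t
          simp only [Pi.add_apply, Pi.single_apply]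
          split_ifs <;> ring
        rw [Finset.sum_congr rfl (fun t _ => h2t t), Finset.sum_add_distrib]
        simp
      rw [hs1, hs2, Int.mul_ediv_cancel_left _ (by norm_num : (2:ℤ) ≠ 0)]
      funext k
      simp only [Pi.sub_apply, Pi.add_apply, Pi.smul_apply, smul_eq_mul,
        Pi.single_apply]
      by_cases h1 : k = i <;> by_cases h2 : k = j
      · exact absurd (h1.symm.trans h2) hij
      · rw [if_pos h1, if_neg h2, if_pos (Or.inl h1),
          show (Equiv.swap i j) k = j from by rw [h1, Equiv.swap_apply_left], h1]
        ring
      · rw [if_neg h1, if_pos h2, if_pos (Or.inr h2),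
          show (Equiv.swap i j) k = i from by rw [h2, Equiv.swap_apply_right], h2]
        ring
      · rw [if_neg h1, if_neg h2, if_neg (by rintro (h | h); exacts [h1 h, h2 h]),
          Equiv.swap_apply_of_ne_of_ne h1 h2]
        ring
  · refine ⟨Equiv.swap i j, fun _ => 1,
      fun k => Equiv.swap_apply_self i j k, fun k => Or.inl rfl, fun k => rfl, ?_⟩
    intro x
    unfold reflDir
    have hs1 : (∑ t, (Pi.single i 1 - Pi.single j 1 : Site d) t *
        (Pi.single i 1 - Pi.single j 1 : Site d) t) = (2:ℤ) := by
      have h1t : ∀ t : Fin d, (Pi.single i 1 - Pi.single j 1 : Site d) t *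
          (Pi.single i 1 - Pi.single j 1 : Site d) t
          = (if t = i then 1 else 0) + (if t = j then 1 else 0) := by
        intro t
        simp only [Pi.sub_apply, Pi.single_apply]
        by_cases h : t = i <;> by_cases h2 : t = j
        · exact absurd (h.symm.trans h2) hij
        · norm_num [h, h2, hij, Ne.symm hij]
        · norm_num [h, h2, hij, Ne.symm hij]
        · norm_num [h, h2, hij, Ne.symm hij]
      rw [Finset.sum_congr rfl (fun t _ => h1t t), Finset.sum_add_distrib]
      simp
    have hs2 : (∑ t, x t * (Pi.single i 1 - Pi.single j 1 : Site d) t) = x i - x j := by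
      have h2t : ∀ t : Fin d, x t * (Pi.single i 1 - Pi.single j 1 : Site d) t
          = (if t = i then x t else 0) - (if t = j then x t else 0) := by
        intro t
        simp only [Pi.sub_apply, Pi.single_apply]
        split_ifs <;> ring
      rw [Finset.sum_congr rfl (fun t _ => h2t t), Finset.sum_sub_distrib]
      simp
    rw [hs1, hs2, Int.mul_ediv_cancel_left _ (by norm_num : (2:ℤ) ≠ 0)]
    funext k
    simp only [Pi.sub_apply, Pi.smul_apply, smul_eq_mul, Pi.single_apply]
    by_cases h1 : k = i <;> by_cases h2 : k = j
    · exact absurd (h1.symm.trans h2) hij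
    · rw [if_pos h1, if_neg h2,
        show (Equiv.swap i j) k = j from by rw [h1, Equiv.swap_apply_left], h1]
      ring
    · rw [if_neg h1, if_pos h2,
        show (Equiv.swap i j) k = i from by rw [h2, Equiv.swap_apply_right], h2]
      ring
    · rw [if_neg h1, if_neg h2, Equiv.swap_apply_of_ne_of_ne h1 h2]
      ring

lemma reflDir_involutive {e : Site d} (he : e ∈ dirN d) :
    Function.Involutive (reflDir e) := by
  obtain ⟨σ, s, hσ, hs, hsσ, hform⟩ := reflDir_spec he
  intro x
  funext i
  have h1 := congrFun (hform (reflDir e x)) i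
  have h2 := congrFun (hform x) (σ i)
  rw [h1, h2, hσ i, hsσ i]
  rcases hs i with h | h <;> rw [h] <;> ring

lemma reflDir_nbr {e : Site d} (he : e ∈ dirN d) (x y : Site d) :
    nbr (reflDir e x) (reflDir e y) ↔ nbr x y := by
  obtain ⟨σ, s, hσ, hs, hsσ, hform⟩ := reflDir_spec he
  have hsum : (∑ t, |reflDir e x t - reflDir e y t|) = ∑ t, |x t - y t| := by
    rw [hform x, hform y]
    have hterm : ∀ t, |s t * x (σ t) - s t * y (σ t)| = |x (σ t) - y (σ t)| := by
      intro t
      rcases hs t with h | h <;> rw [h]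
      · simp
      · rw [show (-1) * x (σ t) - (-1) * y (σ t) = -(x (σ t) - y (σ t)) by ring, abs_neg]
    dsimp only
    rw [Finset.sum_congr rfl (fun t _ => hterm t)]
    exact Equiv.sum_comp σ (fun t => |x t - y t|)
  unfold nbr
  rw [hsum]

lemma reflDir_zero {e : Site d} (he : e ∈ dirN d) : reflDir e 0 = 0 := by
  obtain ⟨σ, s, hσ, hs, hsσ, hform⟩ := reflDir_spec he
  funext i
  rw [congrFun (hform 0) i]
  simp

end Refl
/-- Lattice symmetries. Let `n > 0`, `κ > 0`, let `T` be any infinitive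
toppling sequence for `BS(n·δ₀, κ)`, `u` its odometer and `V = ⋃_k V_k` its final set of
visited sites. Then for every `e ∈ 𝒩`, the reflection `ρ_e` across the hyperplane
through the origin orthogonal to `e` satisfies `u(ρ_e x) = u x` for all `x ∈ ℤ^d` and
`ρ_e(V) = V`. -/
theorem stmt2 {d : ℕ} (hd : 2 ≤ d) (n κ : ℝ) (hn : 0 < n) (hκ : 0 < κ)
    (T : ℕ → Site d) (hT : Infinitive T)
    (u : Site d → ℝ)
    (hu : ∀ x : Site d,
      Tendsto (fun k => (evolve κ (fun y => if y = 0 then n else 0) T k).u x)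
        atTop (nhds (u x))) :
    ∀ e ∈ dirN d,
      (∀ x : Site d, u (reflDir e x) = u x) ∧
      reflDir e '' (⋃ k : ℕ, (evolve κ (fun y => if y = 0 then n else 0) T k).V) =
        ⋃ k : ℕ, (evolve κ (fun y => if y = 0 then n else 0) T k).V := by
  intro e he
  set μ0 : Site d → ℝ := fun y => if y = 0 then n else 0 with hμ0def
  have hinv := reflDir_involutive he
  have hnbr := reflDir_nbr he
  have hzero := reflDir_zero he
  set g := reflDir e with hgdef
  have hμ0g : ∀ x, μ0 (g x) = μ0 x := by
    intro x
    by_cases hx : x = 0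
    · rw [hx, hzero]
    · have hgx : g x ≠ 0 := by
        intro hc
        apply hx
        rw [← hinv x, hc, hzero]
      simp only [hμ0def]
      rw [if_neg hgx, if_neg hx]
  have hequi := evolve_mapC (κ := κ) hinv hnbr hμ0g T
  have hA := lemA hκ hT hu (fun j => g (T j))
  have hle : ∀ x, u (g x) ≤ u x := by
    intro x
    have hj : ∀ j, (evolve κ μ0 T j).u (g x) ≤ u x := by
      intro j
      have h := hA j x
      rw [hequi j] at h
      exact h
    exact le_of_tendsto (hu (g x)) (Filter.Eventually.of_forall hj)
  have hueq : ∀ x, u (g x) = u x := by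
    intro x
    refine le_antisymm (hle x) ?_
    have h := hle (g x)
    rwa [hinv x] at h
  refine ⟨hueq, ?_⟩
  rw [iUnion_V hκ hu]
  have hmem : ∀ x, g x ∈ VLim μ0 u ↔ x ∈ VLim μ0 u := by
    intro x
    unfold VLim
    simp only [Set.mem_union, Function.mem_support, Set.mem_setOf_eq]
    constructor
    · rintro (h | ⟨z, hz, hzu⟩)
      · left; rwa [hμ0g x] at h
      · right
        exact ⟨g z, (nbr_g hinv hnbr z x).mpr hz, by rw [hueq z]; exact hzu⟩
    · rintro (h | ⟨z, hz, hzu⟩)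
      · left; rw [hμ0g x]; exact h
      · right
        exact ⟨g z, (hnbr z x).mpr hz, by rw [hueq z]; exact hzu⟩
  ext y
  simp only [Set.mem_image]
  constructor
  · rintro ⟨x, hx, rfl⟩
    exact (hmem x).mpr hx
  · intro hy
    exact ⟨g y, (hmem y).mpr hy, hinv y⟩

end Sandpile
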